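/- Let C₁ ⊆ ℂ^M be a linear subspace with orthogonal projection P_{C₁}, let s ∈ [0,∞)^M, C₂ = {c : |c_i| = s_i for all i}, and let P_{C₂} be a closest-point map onto C₂ (i.e., P_{C₂}(c) ∈ C₂ and ‖c − P_{C₂}(c)‖₂ ≤ ‖c − y‖₂ for all y ∈ C₂). Define the Griffin–Lim iterates by c₀ ∈ C₁ and c_{n+1} = P_{C₁}(P_{C₂}(c_n)). Then the sequence of objective values d_{C₂}(c_n) is nonincreasing: d_{C₂}(c_{n+1}) ≤ d_{C₂}(c_n) for all n. -/

import Mathlib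

/-! The Griffin–Lim step is one round of alternating projections. With `p = P₂(cₙ)`, the
distance `d_{C₂}(cₙ)` is attained at `p`, while `cₙ₊₁ = P₁(p)` is at least as close to `p` as
`cₙ ∈ C₁` is; hence `d_{C₂}(cₙ₊₁) ≤ ‖cₙ₊₁ - p‖ ≤ ‖cₙ - p‖ = d_{C₂}(cₙ)`. -/

namespace Metric

variable {α : Type*} [PseudoMetricSpace α]

theorem infDist_eq_dist_of_forall_dist_le {x p : α} {s : Set α} (hp : p ∈ s)
    (hmin : ∀ y ∈ s, dist x p ≤ dist x y) : infDist x s = dist x p :=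
  le_antisymm (infDist_le_dist_of_mem hp) ((le_infDist ⟨p, hp⟩).2 hmin)

theorem infDist_le_infDist_of_dist_le_of_forall_dist_le {x p q : α} {s : Set α} (hp : p ∈ s)
    (hmin : ∀ y ∈ s, dist x p ≤ dist x y) (hq : dist q p ≤ dist x p) :
    infDist q s ≤ infDist x s :=
  calc infDist q s ≤ dist q p := infDist_le_dist_of_mem hp
    _ ≤ dist x p := hq
    _ = infDist x s := (infDist_eq_dist_of_forall_dist_le hp hmin).symm

end Metric

theorem griffin_lim_objective_nonincreasing_general (M : ℕ)
    (K : Submodule ℂ (EuclideanSpace ℂ (Fin M)))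
    (s : Fin M → ℝ)
    (P₁ P₂ : EuclideanSpace ℂ (Fin M) → EuclideanSpace ℂ (Fin M))
    (hP₁ : ∀ c, P₁ c ∈ K ∧ ∀ y ∈ K, ‖c - P₁ c‖ ≤ ‖c - y‖)
    (hP₂ : ∀ c, (∀ i, ‖P₂ c i‖ = s i) ∧
      ∀ y : EuclideanSpace ℂ (Fin M), (∀ i, ‖y i‖ = s i) →
        ‖c - P₂ c‖ ≤ ‖c - y‖)
    (c : ℕ → EuclideanSpace ℂ (Fin M)) (hc0 : c 0 ∈ K)
    (hrec : ∀ n, c (n + 1) = P₁ (P₂ (c n))) :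
    ∀ n : ℕ,
      Metric.infDist (c (n + 1)) {d : EuclideanSpace ℂ (Fin M) | ∀ i, ‖d i‖ = s i} ≤
      Metric.infDist (c n) {d : EuclideanSpace ℂ (Fin M) | ∀ i, ‖d i‖ = s i} := by
  have hmem : ∀ n, c n ∈ K
    | 0 => hc0
    | n + 1 => hrec n ▸ (hP₁ _).1
  intro n
  obtain ⟨hP₂_mem, hP₂_min⟩ := hP₂ (c n)
  refine Metric.infDist_le_infDist_of_dist_le_of_forall_dist_le hP₂_mem
    (fun y hy => by simpa only [dist_eq_norm] using hP₂_min y hy) ?_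
  rw [hrec n, dist_comm, dist_comm (c n), dist_eq_norm, dist_eq_norm]
  exact (hP₁ _).2 (c n) (hmem n)

/-- Let `K = C₁` be a linear subspace of `ℂ^M` with closest-point
(= orthogonal) projection `P₁`, and let `P₂` be a closest-point map onto the magnitude
set `C₂ = {c : |cᵢ| = sᵢ ∀ i}`. For the Griffin–Lim iterates `c₀ ∈ C₁`,
`c_{n+1} = P₁(P₂(c_n))`, the objective values `d_{C₂}(c_n)` are nonincreasing. -/
theorem griffin_lim_objective_nonincreasing (M : ℕ)
    (K : Submodule ℂ (EuclideanSpace ℂ (Fin M)))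
    (s : Fin M → ℝ) (hs : ∀ i, 0 ≤ s i)
    (P₁ P₂ : EuclideanSpace ℂ (Fin M) → EuclideanSpace ℂ (Fin M))
    (hP₁ : ∀ c, P₁ c ∈ K ∧ ∀ y ∈ K, ‖c - P₁ c‖ ≤ ‖c - y‖)
    (hP₂ : ∀ c, (∀ i, ‖P₂ c i‖ = s i) ∧
      ∀ y : EuclideanSpace ℂ (Fin M), (∀ i, ‖y i‖ = s i) →
        ‖c - P₂ c‖ ≤ ‖c - y‖)
    (c : ℕ → EuclideanSpace ℂ (Fin M)) (hc0 : c 0 ∈ K)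
    (hrec : ∀ n, c (n + 1) = P₁ (P₂ (c n))) :
    ∀ n : ℕ,
      Metric.infDist (c (n + 1)) {d : EuclideanSpace ℂ (Fin M) | ∀ i, ‖d i‖ = s i} ≤
      Metric.infDist (c n) {d : EuclideanSpace ℂ (Fin M) | ∀ i, ‖d i‖ = s i} :=
  griffin_lim_objective_nonincreasing_general M K s P₁ P₂ hP₁ hP₂ c hc0 hrec
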